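/- arXiv:0710.0261 — 4 statements merged into one kernel-verified Lean document; each statement's English description precedes it below -/
import Mathlib

section
/- The trace of the representation matrix ρ_{(k,l)}(σ_p) (for any p) equals q·C(k+l-1, l) - q^{-1}·C(k+l-1, l-1); consequently the trace of the Hamiltonian Σ_{p=1}^{k+l} ρ_{(k,l)}(σ_p) equals (k+l)(q·C(k+l-1,l) - q^{-1}·C(k+l-1,l-1)) = (qk - q^{-1}l)·C(k+l, l). -/
open Finset Matrix

/-- The `q`-number `(m)_q = (q^m - q^{-m})/(q - q^{-1})`. -/
noncomputable def qnum (q : ℂ) (m : ℕ) : ℂ := (q ^ m - q⁻¹ ^ m) / (q - q⁻¹)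

/-- The index set of the corner representation `ρ_{(k,l)}`:
`l`-element subsets `I` of `{2, ..., k+l+1}`. -/
abbrev idxKL (k l : ℕ) := ↥((Finset.Icc 2 (k+l+1)).powersetCard l)

/-- `I` with `p` and `p+1` interchanged. -/
def spSet (p : ℕ) (I : Finset ℕ) : Finset ℕ := I.image (Equiv.swap p (p+1))

/-- The corner representation `ρ_{(k,l)}(σ_p)` of `H_{k+l+1}` on the space with basis
`{v_I}`: `ρ(σ_p) v_I = q v_I` if `p, p+1 ∉ I`; `ρ(σ_p) v_I = -q⁻¹ v_I` if `p, p+1 ∈ I`;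
`ρ(σ_p) v_I = (q^p/(p)_q) v_I + ((p+1)_q/(p)_q) v_{s_p I}` if `p ∈ I, p+1 ∉ I`;
`ρ(σ_p) v_I = -(q^{-p}/(p)_q) v_I + ((p-1)_q/(p)_q) v_{s_p I}` if `p ∉ I, p+1 ∈ I`.
The `(J, I)` matrix entry is the coefficient of `v_J` in `ρ(σ_p) v_I`. -/
noncomputable def rhoKL (k l : ℕ) (q : ℂ) (p : ℕ) :
    Matrix (idxKL k l) (idxKL k l) ℂ :=
  Matrix.of fun J I =>
    if p ∉ (I : Finset ℕ) ∧ p + 1 ∉ (I : Finset ℕ) then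
      (if (J : Finset ℕ) = (I : Finset ℕ) then q else 0)
    else if p ∈ (I : Finset ℕ) ∧ p + 1 ∈ (I : Finset ℕ) then
      (if (J : Finset ℕ) = (I : Finset ℕ) then -q⁻¹ else 0)
    else if p ∈ (I : Finset ℕ) then
      (if (J : Finset ℕ) = (I : Finset ℕ) then q ^ p / qnum q p
       else if (J : Finset ℕ) = spSet p I then qnum q (p+1) / qnum q p else 0)
    else
      (if (J : Finset ℕ) = (I : Finset ℕ) then -(q⁻¹ ^ p) / qnum q p
       else if (J : Finset ℕ) = spSet p I then qnum q (p-1) / qnum q p else 0)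

/-!
The diagonal entry of `ρ(σ_p)` at `v_I` depends only on whether `p` and `p + 1` lie in `I`, and
it is affine in these two indicators because `q^p/(p)_q - q^{-p}/(p)_q = q - q⁻¹`. Hence the trace
is `q·C(k+l, l)` corrected by the numbers of subsets containing `p`, resp. `p + 1`, each equal to
`C(k+l-1, l-1)`; no subset contains `1`, but for `p = 1` the corresponding coefficient
`q/(1)_q - q` vanishes as well. Pascal's rule gives the trace of `ρ(σ_p)`, and summing over `p`
with `(k+l)·C(k+l-1, l-1) = l·C(k+l, l)` gives the trace of the Hamiltonian.
-/

lemma card_filter_mem_powersetCard_succ {α : Type*} [DecidableEq α] {s : Finset α} {a : α}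
    (ha : a ∈ s) (n : ℕ) : #{I ∈ s.powersetCard (n + 1) | a ∈ I} = (#s - 1).choose n := by
  simpa using card_filter_powersetCard_subset {a} s (n + 1) (singleton_subset_iff.2 ha) (by simp)

section QNumber

variable {q : ℂ} {m : ℕ}

lemma sub_inv_ne_zero_of_qnum_ne_zero (h : qnum q m ≠ 0) : q - q⁻¹ ≠ 0 := fun h0 =>
  h (by simp [qnum, h0])

lemma qnum_one (h : q - q⁻¹ ≠ 0) : qnum q 1 = 1 := by
  rw [qnum, pow_one, pow_one, div_self h]

lemma pow_div_qnum_sub_inv_pow_div_qnum (h : qnum q m ≠ 0) :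
    q ^ m / qnum q m - q⁻¹ ^ m / qnum q m = q - q⁻¹ := by
  rw [div_sub_div_same, div_eq_iff h, qnum, mul_div_cancel₀ _ (sub_inv_ne_zero_of_qnum_ne_zero h)]

end QNumber

section Trace

variable {k l p : ℕ} {q : ℂ}

lemma rhoKL_apply_self (hp : qnum q p ≠ 0) (I : idxKL k l) :
    rhoKL k l q p I I = q + (q ^ p / qnum q p - q) * (if p ∈ (I : Finset ℕ) then 1 else 0)
      + (-(q⁻¹ ^ p) / qnum q p - q) * (if p + 1 ∈ (I : Finset ℕ) then 1 else 0) := by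
  have hsum := pow_div_qnum_sub_inv_pow_div_qnum hp
  by_cases h₁ : p ∈ (I : Finset ℕ) <;> by_cases h₂ : p + 1 ∈ (I : Finset ℕ) <;>
    simp only [rhoKL, of_apply, h₁, h₂, not_true_eq_false, not_false_eq_true, and_self, and_true,
      and_false, ↓reduceIte, mul_one, mul_zero, add_zero, add_sub_cancel]
  linear_combination -hsum

lemma trace_rhoKL (hp : qnum q p ≠ 0) :
    trace (rhoKL k l q p) = q * (k + l).choose l
      + (q ^ p / qnum q p - q) * #{I ∈ (Icc 2 (k + l + 1)).powersetCard l | p ∈ I}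
      + (-(q⁻¹ ^ p) / qnum q p - q) * #{I ∈ (Icc 2 (k + l + 1)).powersetCard l | p + 1 ∈ I} := by
  simp_rw [trace, Matrix.diag, rhoKL_apply_self hp]
  rw [sum_coe_sort ((Icc 2 (k + l + 1)).powersetCard l) (fun I => q
      + (q ^ p / qnum q p - q) * (if p ∈ I then 1 else 0)
      + (-(q⁻¹ ^ p) / qnum q p - q) * (if p + 1 ∈ I then 1 else 0))]
  rw [sum_add_distrib, sum_add_distrib, sum_const, ← mul_sum, ← mul_sum, sum_boole, sum_boole,
    card_powersetCard, Nat.card_Icc, show k + l + 1 + 1 - 2 = k + l by omega, nsmul_eq_mul,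
    mul_comm _ q]

lemma trace_rhoKL_succ (hp₁ : 1 ≤ p) (hp : p ≤ k + l + 1) (hqp : qnum q p ≠ 0) :
    trace (rhoKL k (l + 1) q p) = q * (k + l).choose (l + 1) - q⁻¹ * (k + l).choose l := by
  have hcard : ∀ x ∈ Icc 2 (k + l + 2),
      #{I ∈ (Icc 2 (k + l + 2)).powersetCard (l + 1) | x ∈ I} = (k + l).choose l := fun x hx => by
    rw [card_filter_mem_powersetCard_succ hx, Nat.card_Icc,
      show k + l + 2 + 1 - 2 - 1 = k + l by omega]
  have hp_term : (q ^ p / qnum q p - q) * #{I ∈ (Icc 2 (k + l + 2)).powersetCard (l + 1) | p ∈ I}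
      = (q ^ p / qnum q p - q) * (k + l).choose l := by
    rcases hp₁.eq_or_lt with rfl | hp₂
    · simp [qnum_one (sub_inv_ne_zero_of_qnum_ne_zero hqp)]
    · rw [hcard p (mem_Icc.2 ⟨hp₂, by omega⟩)]
  rw [trace_rhoKL hqp, ← add_assoc, hp_term, hcard (p + 1) (mem_Icc.2 ⟨by omega, by omega⟩),
    Nat.choose_succ_succ']
  push_cast
  linear_combination ((k + l).choose l : ℂ) * pow_div_qnum_sub_inv_pow_div_qnum hqp

end Trace

theorem rhoKL_trace_general (k l : ℕ) (hl : 1 ≤ l) (q : ℂ)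
    (hgen : ∀ m : ℕ, 1 ≤ m → m ≤ k + l → qnum q m ≠ 0) :
    (∀ p, 1 ≤ p → p ≤ k + l →
      Matrix.trace (rhoKL k l q p)
        = q * (k + l - 1).choose l - q⁻¹ * (k + l - 1).choose (l - 1)) ∧
    Matrix.trace (∑ p ∈ Finset.Icc 1 (k + l), rhoKL k l q p)
      = (k + l) * (q * (k + l - 1).choose l - q⁻¹ * (k + l - 1).choose (l - 1)) ∧
    Matrix.trace (∑ p ∈ Finset.Icc 1 (k + l), rhoKL k l q p)
      = (q * k - q⁻¹ * l) * (k + l).choose l := by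
  obtain ⟨l, rfl⟩ := Nat.exists_eq_add_of_le' hl
  simp only [← add_assoc, Nat.add_sub_cancel]
  have htr : ∀ p ∈ Icc 1 (k + l + 1),
      trace (rhoKL k (l + 1) q p) = q * (k + l).choose (l + 1) - q⁻¹ * (k + l).choose l :=
    fun p hp => by
      obtain ⟨hp₁, hp⟩ := mem_Icc.1 hp
      exact trace_rhoKL_succ hp₁ hp (hgen p hp₁ hp)
  have hsum : trace (∑ p ∈ Icc 1 (k + l + 1), rhoKL k (l + 1) q p)
      = (k + l + 1 : ℕ) * (q * (k + l).choose (l + 1) - q⁻¹ * (k + l).choose l) := by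
    rw [trace_sum, sum_congr rfl htr, sum_const, Nat.card_Icc, Nat.add_sub_cancel, nsmul_eq_mul]
  refine ⟨fun p hp₁ hp => htr p (mem_Icc.2 ⟨hp₁, hp⟩), by rw [hsum]; push_cast; ring, ?_⟩
  have hpascal : ((k + l + 1).choose (l + 1) : ℂ) = (k + l).choose l + (k + l).choose (l + 1) := by
    exact_mod_cast Nat.choose_succ_succ' (k + l) l
  have habsorb :
      ((k + l + 1 : ℕ) : ℂ) * (k + l).choose l = (k + l + 1).choose (l + 1) * (l + 1) := by
    exact_mod_cast Nat.add_one_mul_choose_eq (k + l) l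
  rw [hsum]
  push_cast at habsorb ⊢
  linear_combination (-q * (k + l + 1 : ℂ)) * hpascal - (q + q⁻¹) * habsorb

/-- `tr ρ_{(k,l)}(σ_p) = q C(k+l-1, l) - q⁻¹ C(k+l-1, l-1)` for every `p`; consequently
the trace of the Hamiltonian `Σ_{p=1}^{k+l} ρ_{(k,l)}(σ_p)` equals
`(k+l)(q C(k+l-1,l) - q⁻¹ C(k+l-1,l-1)) = (q k - q⁻¹ l) C(k+l, l)`. -/
theorem rhoKL_trace (k l : ℕ) (hk : 1 ≤ k) (hl : 1 ≤ l) (q : ℂ) (hq : q ≠ 0)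
    (hgen : ∀ m : ℕ, 1 ≤ m → m ≤ k + l → qnum q m ≠ 0) :
    (∀ p, 1 ≤ p → p ≤ k + l →
      Matrix.trace (rhoKL k l q p)
        = q * (k + l - 1).choose l - q⁻¹ * (k + l - 1).choose (l - 1)) ∧
    Matrix.trace (∑ p ∈ Finset.Icc 1 (k + l), rhoKL k l q p)
      = (k + l) * (q * (k + l - 1).choose l - q⁻¹ * (k + l - 1).choose (l - 1)) ∧
    Matrix.trace (∑ p ∈ Finset.Icc 1 (k + l), rhoKL k l q p)
      = (q * k - q⁻¹ * l) * (k + l).choose l :=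
  rhoKL_trace_general k l hl q hgen
end

section
/- The matrix C(q) = Σ_{p=2}^{k+2} (1/(p-1)_q) e_{p,p} - Σ_{p=2}^{k+1} (1/(p)_q) e_{p,p+1} is invertible (it is upper triangular with nonzero diagonal entries 1/(p-1)_q), so H_{(k,1)}(q) is similar to H^∞ = Σ_{p=2}^{k+1}(e_{p,p+1}+e_{p+1,p}); in particular the spectrum of H_{(k,1)}(q) is independent of q. -/
open Finset Matrix

/-- The matrix unit `e_{i,j}` on the span of `v_2, ..., v_{k+2}` (zero if a label lies
outside `{2, ..., k+2}`); `v_{a+2}` corresponds to the index `a : Fin (k+1)`. -/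
def E (k i j : ℕ) : Matrix (Fin (k+1)) (Fin (k+1)) ℂ :=
  Matrix.of fun a b => if (a : ℕ) + 2 = i ∧ (b : ℕ) + 2 = j then 1 else 0

/-- The corner representation `ρ_{(k,1)}` of the Hecke algebra `H_{k+2}`. -/
noncomputable def rho (k : ℕ) (q : ℂ) (p : ℕ) : Matrix (Fin (k+1)) (Fin (k+1)) ℂ :=
  q • 1 + (qnum q (p-1) / qnum q p) • (E k p (p+1) - E k p p)
        + (qnum q (p+1) / qnum q p) • (E k (p+1) p - E k (p+1) (p+1))

/-- The traceless Hamiltonian `H_{(k,1)}(q)`. -/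
noncomputable def HH (k : ℕ) (q : ℂ) : Matrix (Fin (k+1)) (Fin (k+1)) ℂ :=
  (∑ p ∈ Finset.Icc 2 (k+1),
      ((qnum q (p+1) / qnum q p) • E k p (p+1) + (qnum q (p-1) / qnum q p) • E k (p+1) p
        - (1 / (qnum q p * qnum q (p-1))) • E k p p))
    + (qnum q k / qnum q (k+1)) • E k (k+2) (k+2)

/-- The upper triangular matrix `C(q)`. -/
noncomputable def Cmat (k : ℕ) (q : ℂ) : Matrix (Fin (k+1)) (Fin (k+1)) ℂ :=
  (∑ p ∈ Finset.Icc 2 (k+2), (qnum q (p-1))⁻¹ • E k p p)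
    - (∑ p ∈ Finset.Icc 2 (k+1), (qnum q p)⁻¹ • E k p (p+1))

/-- The `q → ∞` limit Hamiltonian `H^∞ = Σ_{p=2}^{k+1} (e_{p,p+1} + e_{p+1,p})`,
the adjacency matrix of the path (type `A`) Dynkin diagram. -/
noncomputable def Hinf (k : ℕ) : Matrix (Fin (k+1)) (Fin (k+1)) ℂ :=
  ∑ p ∈ Finset.Icc 2 (k+1), (E k p (p+1) + E k (p+1) p)
/-!
Writing `H_{(k,1)}(q)`, `C(q)` and `H^∞` as explicit band matrices, the intertwining relation
`H_{(k,1)}(q) C(q) = C(q) H^∞` becomes an entrywise identity between `q`-numbers. Off the diagonal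
and the superdiagonal it is bookkeeping; on those two bands it is the `q`-number identity
`(m + 1)_q ^ 2 = (m)_q (m + 2)_q + 1`. The matrix `C(q)` is upper triangular with diagonal entries
`1 / (a + 1)_q ≠ 0`, hence invertible, and conjugation by a unit preserves the spectrum.
-/

lemma qnum_zero (q : ℂ) : qnum q 0 = 0 := by simp [qnum]

lemma sub_inv_ne_zero_of_qnum_one_ne_zero {q : ℂ} (h : qnum q 1 ≠ 0) : q - q⁻¹ ≠ 0 :=
  fun h₀ => h (by simp [qnum, h₀])

lemma ne_zero_of_qnum_one_ne_zero {q : ℂ} (h : qnum q 1 ≠ 0) : q ≠ 0 := by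
  rintro rfl
  simp [qnum] at h

lemma qnum_succ_sq {q : ℂ} (hq : q ≠ 0) (hd : q - q⁻¹ ≠ 0) (m : ℕ) :
    qnum q (m + 1) ^ 2 = qnum q m * qnum q (m + 2) + 1 := by
  have hm : q ^ m * q⁻¹ ^ m = 1 := by rw [← mul_pow, mul_inv_cancel₀ hq, one_pow]
  have key : (q ^ (m + 1) - q⁻¹ ^ (m + 1)) ^ 2
      = (q ^ m - q⁻¹ ^ m) * (q ^ (m + 2) - q⁻¹ ^ (m + 2)) + (q - q⁻¹) ^ 2 := by
    linear_combination (q - q⁻¹) ^ 2 * hm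
  simp only [qnum]
  rw [div_pow, div_mul_div_comm, key, ← pow_two, add_div, div_self (pow_ne_zero 2 hd)]

section MatrixUnits

variable {k : ℕ}

lemma E_apply (i j : ℕ) (a b : Fin (k + 1)) :
    E k i j a b = if (a : ℕ) + 2 = i ∧ (b : ℕ) + 2 = j then 1 else 0 := rfl

lemma sum_smul_E_add_apply (s : Finset ℕ) (f : ℕ → ℂ) (d : ℕ) (a b : Fin (k + 1)) :
    (∑ p ∈ s, f p • E k p (p + d)) a b =
      if (a : ℕ) + 2 ∈ s ∧ (b : ℕ) = a + d then f (a + 2) else 0 := by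
  simp only [Matrix.sum_apply, Matrix.smul_apply, E_apply, smul_eq_mul, mul_ite, mul_one,
    mul_zero]
  simp_rw [show ∀ p, ((a : ℕ) + 2 = p ∧ (b : ℕ) + 2 = p + d) ↔ (a + 2 = p ∧ (b : ℕ) = a + d)
    from fun p => by omega, ite_and, sum_ite_eq]

lemma sum_smul_E_apply (s : Finset ℕ) (f : ℕ → ℂ) (a b : Fin (k + 1)) :
    (∑ p ∈ s, f p • E k p p) a b =
      if (a : ℕ) + 2 ∈ s ∧ b = a then f (a + 2) else 0 := by
  simpa [Fin.ext_iff] using sum_smul_E_add_apply s f 0 a b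

lemma sum_smul_E_succ_apply (s : Finset ℕ) (f : ℕ → ℂ) (a b : Fin (k + 1)) :
    (∑ p ∈ s, f p • E k (p + 1) p) a b =
      if (b : ℕ) + 2 ∈ s ∧ (a : ℕ) = b + 1 then f (b + 2) else 0 := by
  simp only [Matrix.sum_apply, Matrix.smul_apply, E_apply, smul_eq_mul, mul_ite, mul_one,
    mul_zero]
  simp_rw [show ∀ p, ((a : ℕ) + 2 = p + 1 ∧ (b : ℕ) + 2 = p) ↔ (b + 2 = p ∧ (a : ℕ) = b + 1)
    from fun p => by omega, ite_and, sum_ite_eq]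

end MatrixUnits

section Entries

variable {k : ℕ} {q : ℂ}

noncomputable def HHEntry (k : ℕ) (q : ℂ) (A B : ℕ) : ℂ :=
  if B = A + 1 then qnum q (A + 3) / qnum q (A + 2)
  else if A = B + 1 then qnum q A / qnum q (A + 1)
  else if A = B then
    if A = k then qnum q k / qnum q (k + 1) else -(qnum q (A + 2) * qnum q (A + 1))⁻¹
  else 0

noncomputable def HinfEntry (A B : ℕ) : ℂ := if B = A + 1 ∨ A = B + 1 then 1 else 0

/-- Since `(0)_q = 0`, the subdiagonal formula also covers the truncated `A - 1` at `A = 0`. -/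
lemma HHEntry_pred (A : ℕ) :
    (if A = 0 then 0 else HHEntry k q A (A - 1)) = qnum q A / qnum q (A + 1) := by
  rcases Nat.eq_zero_or_pos A with rfl | hA
  · simp [qnum_zero]
  · simp (disch := omega) only [HHEntry, if_pos, if_neg]

lemma HHEntry_intertwines_diag (hq : ∀ m : ℕ, 1 ≤ m → m ≤ k + 1 → qnum q m ≠ 0)
    (A : ℕ) (hA : A ≤ k) :
    (HHEntry k q A A - if A = 0 then 0 else HHEntry k q A (A - 1)) / qnum q (A + 1)
      = HinfEntry A A / qnum q (A + 1)
        - if A = k then 0 else HinfEntry (A + 1) A / qnum q (A + 2) := by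
  rw [HHEntry_pred]
  by_cases hk : A = k
  · subst hk
    simp [HHEntry, HinfEntry]
  · have h1 := hq 1 le_rfl (by omega)
    have hA1 := hq (A + 1) (by omega) (by omega)
    have hA2 := hq (A + 2) (by omega) (by omega)
    simp (disch := omega) only [HHEntry, HinfEntry, if_neg, ↓reduceIte, or_true]
    field_simp
    linear_combination qnum_succ_sq (ne_zero_of_qnum_one_ne_zero h1)
      (sub_inv_ne_zero_of_qnum_one_ne_zero h1) A

lemma HHEntry_intertwines (hq : ∀ m : ℕ, 1 ≤ m → m ≤ k + 1 → qnum q m ≠ 0)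
    (A B : ℕ) (hA : A ≤ k) (hB : B ≤ k) :
    (HHEntry k q A B - if B = 0 then 0 else HHEntry k q A (B - 1)) / qnum q (B + 1)
      = HinfEntry A B / qnum q (A + 1)
        - if A = k then 0 else HinfEntry (A + 1) B / qnum q (A + 2) := by
  obtain h | h | h | h | h : B = A + 1 ∨ B = A ∨ A = B + 1 ∨ B = A + 2 ∨
      (B + 1 < A ∨ A + 2 < B) := by omega
  · subst B
    have h1 := hq 1 le_rfl (by omega)
    have hA1 := hq (A + 1) (by omega) (by omega)
    have hA2 := hq (A + 2) (by omega) (by omega)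
    simp (disch := omega) only [HHEntry, HinfEntry, if_pos, if_neg, ↓reduceIte, true_or,
      add_assoc, Nat.reduceAdd]
    field_simp
    linear_combination -qnum_succ_sq (ne_zero_of_qnum_one_ne_zero h1)
      (sub_inv_ne_zero_of_qnum_one_ne_zero h1) (A + 1)
  · subst B
    exact HHEntry_intertwines_diag hq A hA
  · subst A
    have hB1 := hq (B + 1) (by omega) (by omega)
    simp (disch := omega) only [HHEntry, HinfEntry, if_pos, if_neg, ↓reduceIte, or_true,
      zero_div, ite_self]
    field_simp
    ring
  · subst B
    have hA2 := hq (A + 2) (by omega) (by omega)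
    have hA3 := hq (A + 3) (by omega) (by omega)
    simp (disch := omega) only [HHEntry, HinfEntry, if_pos, if_neg, ↓reduceIte, true_or,
      add_assoc, Nat.reduceAdd, zero_div, zero_sub]
    field_simp
  · simp (disch := omega) only [HHEntry, HinfEntry, if_neg, ite_self]
    simp

lemma Cmat_apply (a b : Fin (k + 1)) :
    Cmat k q a b = (if b = a then (qnum q (a + 1))⁻¹ else 0)
      - if (b : ℕ) = a + 1 then (qnum q (a + 2))⁻¹ else 0 := by
  have hdiag : (a : ℕ) + 2 ∈ Icc 2 (k + 2) := mem_Icc.mpr ⟨by omega, by omega⟩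
  have hsuper : (a : ℕ) + 2 ∈ Icc 2 (k + 1) ∧ (b : ℕ) = a + 1 ↔ (b : ℕ) = a + 1 := by
    simp only [mem_Icc]
    omega
  rw [Cmat, Matrix.sub_apply, sum_smul_E_apply, sum_smul_E_add_apply]
  simp only [hdiag, true_and, hsuper, show (a : ℕ) + 2 - 1 = a + 1 by omega]

lemma Hinf_apply (a b : Fin (k + 1)) : Hinf k a b = HinfEntry a b := by
  have hsuper := sum_smul_E_add_apply (Icc 2 (k + 1)) (fun _ => (1 : ℂ)) 1 a b
  have hsub := sum_smul_E_succ_apply (Icc 2 (k + 1)) (fun _ => (1 : ℂ)) a b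
  simp only [one_smul] at hsuper hsub
  rw [Hinf, sum_add_distrib, Matrix.add_apply, hsuper, hsub, HinfEntry]
  have ha := a.is_lt
  have hb := b.is_lt
  simp only [mem_Icc]
  split_ifs <;> first | omega | norm_num

lemma HH_apply (a b : Fin (k + 1)) : HH k q a b = HHEntry k q a b := by
  rw [HH, sum_sub_distrib, sum_add_distrib, Matrix.add_apply, Matrix.sub_apply, Matrix.add_apply,
    sum_smul_E_add_apply, sum_smul_E_succ_apply, sum_smul_E_apply, Matrix.smul_apply, E_apply,
    HHEntry]
  have ha := a.is_lt
  have hb := b.is_lt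
  simp only [mem_Icc, Fin.ext_iff, smul_eq_mul, mul_ite, mul_one, mul_zero]
  generalize (a : ℕ) = A at *
  generalize (b : ℕ) = B at *
  split_ifs <;> try omega
  all_goals (subst_vars; simp [add_assoc])

end Entries

section Products

variable {k : ℕ} {q : ℂ}

lemma mul_Cmat_apply (M : Matrix (Fin (k + 1)) (Fin (k + 1)) ℂ) (a b : Fin (k + 1)) :
    (M * Cmat k q) a b
      = (M a b - if h : (b : ℕ) = 0 then 0 else M a ⟨b - 1, by omega⟩) / qnum q (b + 1) := by
  simp only [mul_apply, Cmat_apply, mul_sub, mul_ite, mul_zero, sum_sub_distrib,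
    Fintype.sum_ite_eq]
  split_ifs with hb
  · rw [sum_eq_zero fun c _ => if_neg (by omega)]
    ring
  · rw [Fintype.sum_eq_single ⟨b - 1, by omega⟩ fun c hc =>
      if_neg fun h => hc (Fin.ext (by simp only; omega))]
    rw [if_pos (by simp; omega)]
    simp only [show (b : ℕ) - 1 + 2 = b + 1 by omega]
    ring

lemma Cmat_mul_apply (M : Matrix (Fin (k + 1)) (Fin (k + 1)) ℂ) (a b : Fin (k + 1)) :
    (Cmat k q * M) a b = M a b / qnum q (a + 1)
      - if h : (a : ℕ) = k then 0 else M ⟨a + 1, by omega⟩ b / qnum q (a + 2) := by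
  simp only [mul_apply, Cmat_apply, sub_mul, ite_mul, zero_mul, sum_sub_distrib,
    Fintype.sum_ite_eq']
  split_ifs with ha
  · rw [sum_eq_zero fun c _ => if_neg (by omega)]
    ring
  · rw [Fintype.sum_eq_single ⟨a + 1, by omega⟩ fun c hc => if_neg fun h => hc (Fin.ext h)]
    rw [if_pos rfl]
    ring

end Products

section Similarity

variable {k : ℕ} {q : ℂ}

lemma Cmat_isUpperTriangular : (Cmat k q).IsUpperTriangular := by
  intro a b hba
  have : (b : ℕ) < a := hba
  rw [Cmat_apply, if_neg (by omega), if_neg (by omega), sub_zero]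

lemma isUnit_det_Cmat (hq : ∀ m : ℕ, 1 ≤ m → m ≤ k + 1 → qnum q m ≠ 0) :
    IsUnit (Cmat k q).det := by
  rw [det_of_isUpperTriangular Cmat_isUpperTriangular, isUnit_iff_ne_zero,
    prod_ne_zero_iff]
  intro a _
  rw [Cmat_apply, if_pos rfl, if_neg (by omega), sub_zero]
  exact inv_ne_zero (hq _ (by omega) (by omega))

lemma HH_mul_Cmat (hq : ∀ m : ℕ, 1 ≤ m → m ≤ k + 1 → qnum q m ≠ 0) :
    HH k q * Cmat k q = Cmat k q * Hinf k := by
  ext a b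
  simp only [mul_Cmat_apply, Cmat_mul_apply, HH_apply, Hinf_apply, dite_eq_ite]
  exact HHEntry_intertwines hq a b (by omega) (by omega)

end Similarity

theorem HH_similar_general (k : ℕ) (q : ℂ)
    (hgen : ∀ m : ℕ, 1 ≤ m → m ≤ k + 1 → qnum q m ≠ 0) :
    IsUnit (Cmat k q) ∧
    HH k q = Cmat k q * Hinf k * (Cmat k q)⁻¹ ∧
    spectrum ℂ (HH k q) = spectrum ℂ (Hinf k) := by
  have hdet := isUnit_det_Cmat hgen
  have hC : IsUnit (Cmat k q) := (isUnit_iff_isUnit_det _).mpr hdet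
  have hsim : HH k q = Cmat k q * Hinf k * (Cmat k q)⁻¹ := by
    rw [← HH_mul_Cmat hgen, mul_nonsing_inv_cancel_right _ _ hdet]
  refine ⟨hC, hsim, ?_⟩
  rw [hsim, ← hC.unit_spec, ← coe_units_inv, spectrum.units_conjugate]

/-- `C(q)` is invertible, so `H_{(k,1)}(q)` is similar to `H^∞`; in particular the
spectrum of `H_{(k,1)}(q)` coincides with that of `H^∞` and is independent of `q`. -/
theorem HH_similar (k : ℕ) (q : ℂ) (hq : q ≠ 0)
    (hgen : ∀ m : ℕ, 1 ≤ m → m ≤ k + 1 → qnum q m ≠ 0) :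
    IsUnit (Cmat k q) ∧
    HH k q = Cmat k q * Hinf k * (Cmat k q)⁻¹ ∧
    spectrum ℂ (HH k q) = spectrum ℂ (Hinf k) :=
  HH_similar_general k q hgen
end

section
/- With σ^{(m)} = 1^{⊗(m-1)} ⊗ ρ_{(k+l-1,1)}(σ_p) ⊗ 1^{⊗(l-m)} on V^{⊗l} and A_l the full antisymmetrizer on V^{⊗l}, the identity q^{1-l} A_l (σ^{(1)} σ^{(2)} ⋯ σ^{(l)}) A_l = A_l (Σ_{m=1}^{l} σ^{(m)} - (l-1) q · 1^{⊗l}) A_l holds for every p with 1 ≤ p ≤ k+l. -/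
open Finset Matrix

/-- The antisymmetrizer `A_l` on `V^{⊗l}` (with `dim V = n`), written in the basis
`v_f = v_{f 0} ⊗ ⋯ ⊗ v_{f (l-1)}`:
`A_l(v_g) = (1/l!) Σ_{s ∈ S_l} sgn(s) v_{g∘s}`. -/
noncomputable def Al (n l : ℕ) : Matrix (Fin l → Fin n) (Fin l → Fin n) ℂ :=
  Matrix.of fun f g =>
    ((l.factorial : ℂ))⁻¹ *
      ∑ s : Equiv.Perm (Fin l), ((Equiv.Perm.sign s : ℤ) : ℂ) * (if f = g ∘ s then 1 else 0)

/-- The operator `M^{(m)} = 1^{⊗(m-1)} ⊗ M ⊗ 1^{⊗(l-m)}` acting on the `m`-th factor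
of `V^{⊗l}`. -/
noncomputable def Skron (n l : ℕ) (M : Matrix (Fin n) (Fin n) ℂ) (m : Fin l) :
    Matrix (Fin l → Fin n) (Fin l → Fin n) ℂ :=
  Matrix.of fun f g => ∏ j, if j = m then M (f j) (g j) else (if f j = g j then (1 : ℂ) else 0)

/-- The `l`-fold tensor (Kronecker) power `M^{⊗l}` acting on `V^{⊗l}`. -/
noncomputable def Tpow (n l : ℕ) (M : Matrix (Fin n) (Fin n) ℂ) :
    Matrix (Fin l → Fin n) (Fin l → Fin n) ℂ :=
  Matrix.of fun f g => ∏ j, M (f j) (g j)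

/-!
Write `ρ(σ_p) = q·1 + w vᵀ` with `N = w vᵀ` of rank one, so that `σ⁽ᵐ⁾ = q·1 + N⁽ᵐ⁾`.
For `m ≠ m'` the entries of `N⁽ᵐ⁾ N⁽ᵐ'⁾` at `(f, g)` are
`w(f m) w(f m') v(g m) v(g m') ∏_{j ≠ m, m'} δ(f j, g j)`, symmetric under exchanging the
`m`-th and `m'`-th output factors; since `A_l` changes sign under that exchange,
`A_l N⁽ᵐ⁾ N⁽ᵐ'⁾ = 0`. Expanding `A_l ∏ₘ (q·1 + N⁽ᵐ⁾)` therefore leaves only the terms with at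
most one factor `N`:
`A_l σ⁽¹⁾ ⋯ σ⁽ˡ⁾ = q^l A_l + q^(l-1) Σₘ A_l N⁽ᵐ⁾ = q^(l-1) A_l (Σₘ σ⁽ᵐ⁾ - (l-1) q)`.
-/

section PiKron

variable {ι α R : Type*} [Fintype ι] [CommSemiring R]

def piKron (M : ι → Matrix α α R) : Matrix (ι → α) (ι → α) R :=
  Matrix.of fun f g => ∏ j, M j (f j) (g j)

theorem piKron_mul [DecidableEq ι] [Fintype α] (M M' : ι → Matrix α α R) :
    piKron M * piKron M' = piKron (M * M') := by
  ext f g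
  simp only [piKron, mul_apply, of_apply, Pi.mul_apply]
  rw [Fintype.prod_sum]
  simp only [prod_mul_distrib]

end PiKron

section Skron

variable {n l : ℕ}

theorem Skron_eq_piKron (M : Matrix (Fin n) (Fin n) ℂ) (m : Fin l) :
    Skron n l M m = piKron (Pi.mulSingle m M) := by
  ext f g
  simp only [Skron, piKron, of_apply]
  refine prod_congr rfl fun j _ => ?_
  by_cases h : j = m <;> simp [h, one_apply]

theorem Skron_apply (M : Matrix (Fin n) (Fin n) ℂ) (m : Fin l) (f g : Fin l → Fin n) :
    Skron n l M m f g = M (f m) (g m) * ∏ j ∈ univ.erase m, if f j = g j then 1 else 0 := by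
  rw [Skron, of_apply, ← mul_prod_erase univ _ (mem_univ m), if_pos rfl]
  congr 1
  exact prod_congr rfl fun j hj => if_neg (ne_of_mem_erase hj)

theorem Skron_one (m : Fin l) : Skron n l 1 m = 1 := by
  ext f g
  simp [Skron, one_apply, prod_boole, funext_iff]

theorem Skron_add (M M' : Matrix (Fin n) (Fin n) ℂ) (m : Fin l) :
    Skron n l (M + M') m = Skron n l M m + Skron n l M' m := by
  ext f g
  simp only [Skron_apply, Matrix.add_apply, add_mul]

theorem Skron_smul (c : ℂ) (M : Matrix (Fin n) (Fin n) ℂ) (m : Fin l) :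
    Skron n l (c • M) m = c • Skron n l M m := by
  ext f g
  simp only [Skron_apply, Matrix.smul_apply, smul_eq_mul, mul_assoc]

theorem Skron_mul_Skron_apply {m m' : Fin l} (hm : m ≠ m') (M M' : Matrix (Fin n) (Fin n) ℂ)
    (f g : Fin l → Fin n) :
    (Skron n l M m * Skron n l M' m') f g = M (f m) (g m) * M' (f m') (g m') *
      ∏ j ∈ (univ.erase m).erase m', if f j = g j then 1 else 0 := by
  rw [Skron_eq_piKron, Skron_eq_piKron, piKron_mul, piKron, of_apply,
    ← mul_prod_erase univ _ (mem_univ m),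
    ← mul_prod_erase (univ.erase m) _ (mem_erase.mpr ⟨hm.symm, mem_univ m'⟩), ← mul_assoc]
  simp only [Pi.mul_apply, Pi.mulSingle_eq_same, Pi.mulSingle_eq_of_ne hm,
    Pi.mulSingle_eq_of_ne hm.symm, mul_one, one_mul]
  congr 1
  refine prod_congr rfl fun j hj => ?_
  obtain ⟨hjm', hjm⟩ : j ≠ m' ∧ j ≠ m := ⟨ne_of_mem_erase hj, ne_of_mem_erase (mem_of_mem_erase hj)⟩
  rw [Pi.mulSingle_eq_of_ne hjm, Pi.mulSingle_eq_of_ne hjm', mul_one, one_apply]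

theorem Skron_vecMulVec_mul_apply_comp_swap {m m' : Fin l} (hm : m ≠ m') (w v : Fin n → ℂ)
    (f g : Fin l → Fin n) :
    (Skron n l (vecMulVec w v) m * Skron n l (vecMulVec w v) m') (f ∘ Equiv.swap m m') g =
      (Skron n l (vecMulVec w v) m * Skron n l (vecMulVec w v) m') f g := by
  rw [Skron_mul_Skron_apply hm, Skron_mul_Skron_apply hm]
  have hfix : ∀ j ∈ (univ.erase m).erase m', (f ∘ Equiv.swap m m') j = f j := fun j hj =>
    congrArg f (Equiv.swap_apply_of_ne_of_ne (ne_of_mem_erase (mem_of_mem_erase hj))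
      (ne_of_mem_erase hj))
  rw [prod_congr rfl fun j hj => by rw [hfix j hj]]
  simp only [vecMulVec_apply, Function.comp_apply, Equiv.swap_apply_left, Equiv.swap_apply_right]
  ring

end Skron

section Antisymmetrizer

variable {n l : ℕ}

theorem Al_apply_comp_perm (t : Equiv.Perm (Fin l)) (f g : Fin l → Fin n) :
    Al n l f (g ∘ t) = (Equiv.Perm.sign t : ℤ) * Al n l f g := by
  have hsq : ((Equiv.Perm.sign t : ℤ) : ℂ) * (Equiv.Perm.sign t : ℤ) = 1 := by
    rw [← Int.cast_mul, ← Units.val_mul, Int.units_mul_self, Units.val_one, Int.cast_one]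
  simp only [Al, of_apply]
  conv_rhs => rw [← Equiv.sum_comp (Equiv.mulLeft t)]
  simp only [Equiv.coe_mulLeft, Equiv.Perm.coe_mul, Equiv.Perm.sign_mul, Units.val_mul,
    Int.cast_mul, mul_sum, Function.comp_assoc]
  refine sum_congr rfl fun s _ => ?_
  by_cases hs : f = g ∘ t ∘ s <;> simp only [hs, if_true, if_false, mul_one, mul_zero]
  linear_combination -((l.factorial : ℂ)⁻¹ * (Equiv.Perm.sign s : ℤ)) * hsq

theorem Al_mul_eq_zero_of_comp_swap {m m' : Fin l} (hm : m ≠ m')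
    (X : Matrix (Fin l → Fin n) (Fin l → Fin n) ℂ)
    (hX : ∀ f g, X (f ∘ Equiv.swap m m') g = X f g) : Al n l * X = 0 := by
  ext f g
  have hneg : (Al n l * X) f g = -(Al n l * X) f g := calc
    (Al n l * X) f g = ∑ h, Al n l f (h ∘ Equiv.swap m m') * X (h ∘ Equiv.swap m m') g :=
      (Fintype.sum_bijective (· ∘ Equiv.swap m m')
        (Function.Involutive.bijective fun h => by ext; simp) _ _ fun _ => rfl).symm
    _ = -(Al n l * X) f g := by
      simp [Al_apply_comp_perm, hX, Equiv.Perm.sign_swap hm, mul_apply]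
  exact CharZero.eq_neg_self_iff.mp hneg

theorem Al_mul_Skron_mul_Skron_vecMulVec {m m' : Fin l} (hm : m ≠ m') (w v : Fin n → ℂ) :
    Al n l * Skron n l (vecMulVec w v) m * Skron n l (vecMulVec w v) m' = 0 := by
  rw [mul_assoc]
  exact Al_mul_eq_zero_of_comp_swap hm _ (Skron_vecMulVec_mul_apply_comp_swap hm w v)

end Antisymmetrizer

section ListProd

variable {ι K R : Type*} [CommSemiring K] [Semiring R] [Algebra K R] (c : K) (N : ι → R)

theorem mul_list_prod_smul_one_add_of_mul_eq_zero (b : R) (L : List ι)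
    (hb : ∀ i ∈ L, b * N i = 0) :
    b * (L.map fun i => c • 1 + N i).prod = c ^ L.length • b := by
  induction L with
  | nil => simp
  | cons i L ih =>
    rw [List.map_cons, List.prod_cons, ← mul_assoc, mul_add, mul_smul_comm, mul_one,
      hb i List.mem_cons_self, add_zero, smul_mul_assoc,
      ih fun j hj => hb j (List.mem_cons_of_mem i hj), smul_smul, List.length_cons, pow_succ']

theorem smul_mul_list_prod_smul_one_add (a : R) (hN : ∀ i j, i ≠ j → a * N i * N j = 0)
    (L : List ι) (hL : L.Nodup) :
    c • (a * (L.map fun i => c • 1 + N i).prod) =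
      c ^ (L.length + 1) • a + c ^ L.length • (L.map fun i => a * N i).sum := by
  induction L with
  | nil => simp
  | cons i L ih =>
    obtain ⟨hi, hL⟩ := List.nodup_cons.mp hL
    rw [List.map_cons, List.prod_cons, ← mul_assoc, mul_add, mul_smul_comm, mul_one, add_mul,
      smul_mul_assoc, mul_list_prod_smul_one_add_of_mul_eq_zero c N _ L
        fun j hj => hN i j fun h => hi (h ▸ hj), smul_add, ih hL]
    simp only [List.map_cons, List.sum_cons, List.length_cons]
    module

theorem smul_mul_ofFn_prod_smul_one_add {l : ℕ} (N : Fin l → R) (a : R)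
    (hN : ∀ i j, i ≠ j → a * N i * N j = 0) :
    c • (a * (List.ofFn fun i => c • 1 + N i).prod) = c ^ (l + 1) • a + c ^ l • ∑ i, a * N i := by
  have h := smul_mul_list_prod_smul_one_add c N a hN (List.finRange l) (List.nodup_finRange l)
  rwa [List.length_finRange, ← List.ofFn_eq_map, ← List.ofFn_eq_map, List.sum_ofFn] at h

end ListProd

def basisVec (k i : ℕ) : Fin (k+1) → ℂ := fun a => if (a : ℕ) + 2 = i then 1 else 0

theorem E_eq_vecMulVec (k i j : ℕ) : E k i j = vecMulVec (basisVec k i) (basisVec k j) := by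
  ext a b
  simp only [E, basisVec, of_apply, vecMulVec_apply, ite_zero_mul_ite_zero, mul_one]

theorem rho_eq_smul_one_add_vecMulVec (k : ℕ) (q : ℂ) (p : ℕ) :
    rho k q p = q • 1 + vecMulVec
      ((qnum q (p-1) / qnum q p) • basisVec k p - (qnum q (p+1) / qnum q p) • basisVec k (p+1))
      (basisVec k (p+1) - basisVec k p) := by
  ext a b
  simp only [rho, E_eq_vecMulVec, Matrix.add_apply, Matrix.smul_apply, Matrix.sub_apply,
    vecMulVec_apply, Pi.sub_apply, Pi.smul_apply, smul_eq_mul]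
  ring

theorem antisym_product_identity_general (k l : ℕ) (q : ℂ) (hq : q ≠ 0) (p : ℕ) :
    q ^ (1 - (l : ℤ)) •
        (Al (k+l-1+1) l * (List.ofFn fun m : Fin l => Skron (k+l-1+1) l (rho (k+l-1) q p) m).prod
          * Al (k+l-1+1) l)
      = Al (k+l-1+1) l *
          ((∑ m : Fin l, Skron (k+l-1+1) l (rho (k+l-1) q p) m) - (((l : ℂ) - 1) * q) • 1)
          * Al (k+l-1+1) l := by
  set A := Al (k+l-1+1) l
  obtain ⟨w, v, hρ⟩ : ∃ w v, rho (k+l-1) q p = q • 1 + vecMulVec w v :=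
    ⟨_, _, rho_eq_smul_one_add_vecMulVec _ q p⟩
  set N := fun m : Fin l => Skron (k+l-1+1) l (vecMulVec w v) m
  have hσ : ∀ m, Skron (k+l-1+1) l (rho (k+l-1) q p) m = q • 1 + N m := fun m => by
    rw [hρ, Skron_add, Skron_smul, Skron_one]
  have hexpand := smul_mul_ofFn_prod_smul_one_add q N A
    fun i j hij => Al_mul_Skron_mul_Skron_vecMulVec hij w v
  have hpow : q ^ (-(l : ℤ)) * q ^ l = 1 := by
    rw [_root_.zpow_neg, zpow_natCast, inv_mul_cancel₀ (pow_ne_zero l hq)]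
  have hpow_succ : q ^ (-(l : ℤ)) * q ^ (l + 1) = q := by
    rw [pow_succ, ← mul_assoc, hpow, one_mul]
  simp only [hσ]
  rw [← smul_mul_assoc]
  congr 1
  calc q ^ (1 - (l : ℤ)) • (A * (List.ofFn fun m => q • 1 + N m).prod)
      = q ^ (-(l : ℤ)) • q • (A * (List.ofFn fun m => q • 1 + N m).prod) := by
        rw [smul_smul, ← zpow_add_one₀ hq, neg_add_eq_sub]
    _ = q • A + ∑ m, A * N m := by
        rw [hexpand, smul_add, smul_smul, smul_smul, hpow_succ, hpow, one_smul]
    _ = A * (∑ m, (q • 1 + N m) - ((l - 1 : ℂ) * q) • 1) := by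
        rw [sum_add_distrib, sum_const, card_univ, Fintype.card_fin, mul_sub, mul_add, mul_sum,
          ← Nat.cast_smul_eq_nsmul ℂ]
        simp only [mul_smul_comm, mul_one]
        module

/-- With `σ⁽ᵐ⁾ = 1^{⊗(m-1)} ⊗ ρ_{(k+l-1,1)}(σ_p) ⊗ 1^{⊗(l-m)}` on `V^{⊗l}` and `A_l` the
antisymmetrizer, `q^{1-l} A_l σ⁽¹⁾σ⁽²⁾⋯σ⁽ˡ⁾ A_l = A_l (Σ_m σ⁽ᵐ⁾ - (l-1) q·1) A_l`
for every `1 ≤ p ≤ k+l`. -/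
theorem antisym_product_identity (k l : ℕ) (hl : 1 ≤ l) (q : ℂ) (hq : q ≠ 0)
    (hgen : ∀ m : ℕ, 1 ≤ m → m ≤ k + l → qnum q m ≠ 0)
    (p : ℕ) (hp1 : 1 ≤ p) (hp2 : p ≤ k + l) :
    q ^ (1 - (l : ℤ)) •
        (Al (k+l-1+1) l * (List.ofFn fun m : Fin l => Skron (k+l-1+1) l (rho (k+l-1) q p) m).prod
          * Al (k+l-1+1) l)
      = Al (k+l-1+1) l *
          ((∑ m : Fin l, Skron (k+l-1+1) l (rho (k+l-1) q p) m) - (((l : ℂ) - 1) * q) • 1)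
          * Al (k+l-1+1) l :=
  antisym_product_identity_general k l q hq p
end

section
/- Let ρ_1, ρ_2 be representations of the Hecke algebra H_n on V_1, V_2, and let A ∈ End(V_1 ⊗ V_2) be an idempotent (A^2 = A) commuting with ρ_1(σ_p)⊗ρ_2(σ_p) and with ρ_1(σ_p)⊗1 + 1⊗ρ_2(σ_p) for all p. Suppose for some α ≠ 0: ((q - q^{-1} - α) ρ_1(σ_p)⊗ρ_2(σ_p) + ρ_1(σ_p)⊗1 + 1⊗ρ_2(σ_p) + ((1-α^2)/(q-q^{-1})) 1⊗1) A = 0 for all p. Then ρ(σ_p) := α^{-1} A (ρ_1(σ_p)⊗ρ_2(σ_p)) defines a representation of H_n on the image A(V_1 ⊗ V_2), i.e. the ρ(σ_p) preserve Im A and satisfy the braid, locality and Hecke relations there. -/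
/-!
Write `S = ρ₁(σ_p) ⊗ ρ₂(σ_p)`, `X = ρ₁(σ_p) ⊗ 1 + 1 ⊗ ρ₂(σ_p)` and `δ = q - q⁻¹`. The Hecke
relations of the factors give `S² = δ² S + δ X + 1`, and the hypothesis on `A` eliminates `X`
on the image of `A`: `S² A = δ α S A + α² A`. Because `A` is idempotent and commutes with every
`S_p`, a product of the compressed operators `α⁻¹ A S_p` collapses to a scalar times
`A S_{p₁} ⋯ S_{p_k}`; so the braid and locality relations pass from the `S_p` to the `T_p`, and
`S² A = δ α S A + α² A` becomes `T_p² = δ T_p + 1` on `Im A`.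
-/

open TensorProduct

theorem IsIdempotentElem.mul_mul_mul_of_commute {M : Type*} [Semigroup M] {A X : M}
    (hA : IsIdempotentElem A) (hX : Commute A X) (Y : M) : A * X * (A * Y) = A * (X * Y) := by
  rw [hX.eq, mul_assoc, ← mul_assoc A A Y, hA.eq, ← mul_assoc, ← hX.eq, mul_assoc]

section Compression

variable {K R : Type*} [CommSemiring K] [Semiring R] [Algebra K R] {A : R}

theorem IsIdempotentElem.smul_mul_smul_of_commute (hA : IsIdempotentElem A) {X : R}
    (hX : Commute A X) (c d : K) (Y : R) :
    c • (A * X) * (d • (A * Y)) = (c * d) • (A * (X * Y)) := by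
  rw [smul_mul_smul_comm, hA.mul_mul_mul_of_commute hX]

theorem IsIdempotentElem.smul_mul_braid (hA : IsIdempotentElem A) {X Y : R}
    (hX : Commute A X) (hY : Commute A Y) (hXY : X * Y * X = Y * X * Y) (c : K) :
    c • (A * X) * (c • (A * Y)) * (c • (A * X)) =
      c • (A * Y) * (c • (A * X)) * (c • (A * Y)) := by
  rw [hA.smul_mul_smul_of_commute hX, hA.smul_mul_smul_of_commute hY,
    hA.smul_mul_smul_of_commute (hX.mul_right hY), hA.smul_mul_smul_of_commute (hY.mul_right hX),
    hXY]

theorem IsIdempotentElem.smul_mul_commute (hA : IsIdempotentElem A) {X Y : R}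
    (hX : Commute A X) (hY : Commute A Y) (hXY : Commute X Y) (c : K) :
    Commute (c • (A * X)) (c • (A * Y)) := by
  rw [Commute, SemiconjBy, hA.smul_mul_smul_of_commute hX, hA.smul_mul_smul_of_commute hY, hXY.eq]

end Compression

section Quadratic

variable {K R : Type*} [Field K] [Ring R] [Algebra K R]

theorem IsIdempotentElem.smul_mul_hecke {A S : R} (hA : IsIdempotentElem A) (hS : Commute A S)
    {α δ : K} (hα : α ≠ 0) (hSSA : S * S * A = (δ * α) • (S * A) + α ^ 2 • A) :
    α⁻¹ • (A * S) * (α⁻¹ • (A * S)) * A = δ • (α⁻¹ • (A * S) * A) + A := by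
  have hASA : A * S * A = A * S := by rw [hS.eq, mul_assoc, hA.eq]
  rw [hA.smul_mul_smul_of_commute hS, smul_mul_assoc, mul_assoc, hSSA,
    mul_add, mul_smul_comm, mul_smul_comm, ← mul_assoc, hASA, hA.eq, smul_mul_assoc, hASA]
  match_scalars <;> field_simp

theorem mul_self_mul_of_quadratic {S X A : R} {α δ : K} (hδ : δ ≠ 0)
    (hS : S * S = (δ * δ) • S + δ • X + 1)
    (hrel : ((δ - α) • S + X + ((1 - α ^ 2) / δ) • (1 : R)) * A = 0) :
    S * S * A = (δ * α) • (S * A) + α ^ 2 • A := by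
  simp only [add_mul, smul_mul_assoc, one_mul] at hrel
  rw [hS, add_mul, add_mul, smul_mul_assoc, smul_mul_assoc, one_mul]
  have hXA : X * A = (α - δ) • (S * A) - ((1 - α ^ 2) / δ) • A := by
    rw [eq_sub_iff_add_eq, ← sub_eq_zero, ← hrel]; module
  rw [hXA]
  match_scalars
  · ring
  · field_simp; ring

end Quadratic

theorem TensorProduct.map_mul_self_of_quadratic {R M N : Type*} [CommRing R]
    [AddCommGroup M] [Module R M] [AddCommGroup N] [Module R N] {δ : R}
    {f : Module.End R M} {g : Module.End R N}
    (hf : f * f = δ • f + 1) (hg : g * g = δ • g + 1) :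
    map f g * map f g = (δ * δ) • map f g + δ • (map f LinearMap.id + map LinearMap.id g) + 1 := by
  rw [← TensorProduct.map_mul, hf, hg, map_add_left, map_add_right, map_add_right,
    map_smul_left, map_smul_left, map_smul_right, map_smul_right]
  simp only [← Module.End.one_eq_id, TensorProduct.map_one]
  module

theorem hecke_idempotent_representation_general {V₁ V₂ : Type*}
    [AddCommGroup V₁] [Module ℂ V₁] [AddCommGroup V₂] [Module ℂ V₂]
    (n : ℕ) (q α : ℂ) (hq : q - q⁻¹ ≠ 0) (hα : α ≠ 0)
    (ρ₁ : ℕ → Module.End ℂ V₁) (ρ₂ : ℕ → Module.End ℂ V₂)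
    (braid₁ : ∀ p, 1 ≤ p → p + 2 ≤ n →
      ρ₁ p * ρ₁ (p+1) * ρ₁ p = ρ₁ (p+1) * ρ₁ p * ρ₁ (p+1))
    (braid₂ : ∀ p, 1 ≤ p → p + 2 ≤ n →
      ρ₂ p * ρ₂ (p+1) * ρ₂ p = ρ₂ (p+1) * ρ₂ p * ρ₂ (p+1))
    (loc₁ : ∀ p r, 1 ≤ p → r ≤ n - 1 → p + 1 < r → ρ₁ p * ρ₁ r = ρ₁ r * ρ₁ p)
    (loc₂ : ∀ p r, 1 ≤ p → r ≤ n - 1 → p + 1 < r → ρ₂ p * ρ₂ r = ρ₂ r * ρ₂ p)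
    (hecke₁ : ∀ p, 1 ≤ p → p ≤ n - 1 → ρ₁ p * ρ₁ p = (q - q⁻¹) • ρ₁ p + 1)
    (hecke₂ : ∀ p, 1 ≤ p → p ≤ n - 1 → ρ₂ p * ρ₂ p = (q - q⁻¹) • ρ₂ p + 1)
    (A : Module.End ℂ (V₁ ⊗[ℂ] V₂)) (hA : A * A = A)
    (hcomm₁ : ∀ p, 1 ≤ p → p ≤ n - 1 →
      Commute A (TensorProduct.map (ρ₁ p) (ρ₂ p)))
    (hrel : ∀ p, 1 ≤ p → p ≤ n - 1 →
      ((q - q⁻¹ - α) • TensorProduct.map (ρ₁ p) (ρ₂ p)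
          + TensorProduct.map (ρ₁ p) LinearMap.id + TensorProduct.map LinearMap.id (ρ₂ p)
          + ((1 - α^2) / (q - q⁻¹)) • (1 : Module.End ℂ (V₁ ⊗[ℂ] V₂))) * A = 0)
    (T : ℕ → Module.End ℂ (V₁ ⊗[ℂ] V₂))
    (hT : ∀ p, T p = α⁻¹ • (A * TensorProduct.map (ρ₁ p) (ρ₂ p))) :
    (∀ p x, T p x ∈ LinearMap.range A) ∧
    (∀ p, 1 ≤ p → p + 2 ≤ n → ∀ x ∈ LinearMap.range A,
      (T p * T (p+1) * T p) x = (T (p+1) * T p * T (p+1)) x) ∧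
    (∀ p r, 1 ≤ p → r ≤ n - 1 → p + 1 < r → ∀ x ∈ LinearMap.range A,
      (T p * T r) x = (T r * T p) x) ∧
    (∀ p, 1 ≤ p → p ≤ n - 1 → ∀ x ∈ LinearMap.range A,
      (T p * T p) x = (q - q⁻¹) • (T p x) + x) := by
  obtain rfl : T = fun p ↦ α⁻¹ • (A * map (ρ₁ p) (ρ₂ p)) := funext hT
  have hA' : IsIdempotentElem A := hA
  refine ⟨fun p x ↦ ⟨α⁻¹ • map (ρ₁ p) (ρ₂ p) x, by simp⟩, ?_, ?_, ?_⟩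
  · intro p h1 h2 x _
    rw [hA'.smul_mul_braid (hcomm₁ p h1 (by omega)) (hcomm₁ (p + 1) (by omega) (by omega))
      (by simp only [← TensorProduct.map_mul, braid₁ p h1 h2, braid₂ p h1 h2])]
  · intro p r h1 h2 h3 x _
    rw [(hA'.smul_mul_commute (hcomm₁ p h1 (by omega)) (hcomm₁ r (by omega) h2)
      (by rw [Commute, SemiconjBy, ← TensorProduct.map_mul, ← TensorProduct.map_mul,
        loc₁ p r h1 h2 h3, loc₂ p r h1 h2 h3]) α⁻¹).eq]
  · rintro p h1 h2 _ ⟨y, rfl⟩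
    have hSS := TensorProduct.map_mul_self_of_quadratic (hecke₁ p h1 h2) (hecke₂ p h1 h2)
    have hrelA := hrel p h1 h2
    rw [add_assoc ((q - q⁻¹ - α) • _)] at hrelA
    exact LinearMap.congr_fun (hA'.smul_mul_hecke (hcomm₁ p h1 h2) hα
      (mul_self_mul_of_quadratic hq hSS hrelA)) y

/-- Let `ρ₁, ρ₂` be representations of the Hecke algebra `H_n` (generators `σ_1,…,σ_{n-1}`)
on `V₁, V₂` and let `A` be an idempotent on `V₁ ⊗ V₂` commuting with `ρ₁(σ_p) ⊗ ρ₂(σ_p)`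
and with `ρ₁(σ_p) ⊗ 1 + 1 ⊗ ρ₂(σ_p)` and satisfying
`((q - q⁻¹ - α) ρ₁(σ_p) ⊗ ρ₂(σ_p) + ρ₁(σ_p) ⊗ 1 + 1 ⊗ ρ₂(σ_p) + ((1-α²)/(q-q⁻¹)) 1 ⊗ 1) A = 0`
for some `α ≠ 0`.  Then `ρ(σ_p) := α⁻¹ A (ρ₁(σ_p) ⊗ ρ₂(σ_p))` defines a representation of
`H_n` on `Im A`: it maps into `Im A` and satisfies the braid, locality and Hecke relations
there. -/
theorem hecke_idempotent_representation {V₁ V₂ : Type*}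
    [AddCommGroup V₁] [Module ℂ V₁] [AddCommGroup V₂] [Module ℂ V₂]
    (n : ℕ) (q α : ℂ) (hq : q - q⁻¹ ≠ 0) (hα : α ≠ 0)
    (ρ₁ : ℕ → Module.End ℂ V₁) (ρ₂ : ℕ → Module.End ℂ V₂)
    (braid₁ : ∀ p, 1 ≤ p → p + 2 ≤ n →
      ρ₁ p * ρ₁ (p+1) * ρ₁ p = ρ₁ (p+1) * ρ₁ p * ρ₁ (p+1))
    (braid₂ : ∀ p, 1 ≤ p → p + 2 ≤ n →
      ρ₂ p * ρ₂ (p+1) * ρ₂ p = ρ₂ (p+1) * ρ₂ p * ρ₂ (p+1))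
    (loc₁ : ∀ p r, 1 ≤ p → r ≤ n - 1 → p + 1 < r → ρ₁ p * ρ₁ r = ρ₁ r * ρ₁ p)
    (loc₂ : ∀ p r, 1 ≤ p → r ≤ n - 1 → p + 1 < r → ρ₂ p * ρ₂ r = ρ₂ r * ρ₂ p)
    (hecke₁ : ∀ p, 1 ≤ p → p ≤ n - 1 → ρ₁ p * ρ₁ p = (q - q⁻¹) • ρ₁ p + 1)
    (hecke₂ : ∀ p, 1 ≤ p → p ≤ n - 1 → ρ₂ p * ρ₂ p = (q - q⁻¹) • ρ₂ p + 1)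
    (A : Module.End ℂ (V₁ ⊗[ℂ] V₂)) (hA : A * A = A)
    (hcomm₁ : ∀ p, 1 ≤ p → p ≤ n - 1 →
      Commute A (TensorProduct.map (ρ₁ p) (ρ₂ p)))
    (hcomm₂ : ∀ p, 1 ≤ p → p ≤ n - 1 →
      Commute A (TensorProduct.map (ρ₁ p) LinearMap.id + TensorProduct.map LinearMap.id (ρ₂ p)))
    (hrel : ∀ p, 1 ≤ p → p ≤ n - 1 →
      ((q - q⁻¹ - α) • TensorProduct.map (ρ₁ p) (ρ₂ p)
          + TensorProduct.map (ρ₁ p) LinearMap.id + TensorProduct.map LinearMap.id (ρ₂ p)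
          + ((1 - α^2) / (q - q⁻¹)) • (1 : Module.End ℂ (V₁ ⊗[ℂ] V₂))) * A = 0)
    (T : ℕ → Module.End ℂ (V₁ ⊗[ℂ] V₂))
    (hT : ∀ p, T p = α⁻¹ • (A * TensorProduct.map (ρ₁ p) (ρ₂ p))) :
    (∀ p x, T p x ∈ LinearMap.range A) ∧
    (∀ p, 1 ≤ p → p + 2 ≤ n → ∀ x ∈ LinearMap.range A,
      (T p * T (p+1) * T p) x = (T (p+1) * T p * T (p+1)) x) ∧
    (∀ p r, 1 ≤ p → r ≤ n - 1 → p + 1 < r → ∀ x ∈ LinearMap.range A,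
      (T p * T r) x = (T r * T p) x) ∧
    (∀ p, 1 ≤ p → p ≤ n - 1 → ∀ x ∈ LinearMap.range A,
      (T p * T p) x = (q - q⁻¹) • (T p x) + x) :=
  hecke_idempotent_representation_general n q α hq hα ρ₁ ρ₂ braid₁ braid₂ loc₁ loc₂ hecke₁ hecke₂ A
    hA hcomm₁ hrel T hT
end
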